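/- arXiv:2112.14525 — 2 statements merged into one kernel-verified Lean document; each statement's English description precedes it below -/
import Mathlib

section
/- Let (s_n) be a bounded sequence of nonnegative real numbers and D ∈ ℕ, D ≥ 1, an upper bound on (s_n). Let (a_n) ⊂ [0,1], (r_n) ⊂ ℝ and (v_n) ⊂ [0,∞) be sequences, and let A : ℕ → ℕ, R, V : (0,∞) → ℕ be functions such that (i) A is a rate of divergence for ∑ a_n, (ii) for all ε > 0 and all n ≥ R(ε) one has r_n ≤ ε, and (iii) V is a Cauchy rate for ∑ v_n. If s_{n+1} ≤ (1 − a_n)·s_n + a_n·r_n + v_n for all n ∈ ℕ, then lim s_n = 0 with rate of convergence θ(ε) := A(K + ⌈ln(3D/ε)⌉) + 1, where K := max{ R(ε/3), V(ε/3) + 1 }; that is, for all ε > 0 and all n ≥ θ(ε), s_n ≤ ε. -/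
/-!
Unrolling the recursion from `K` on gives
`s n ≤ s K · ∏_{K ≤ i < n} (1 - aᵢ) + ε/3 · (1 - ∏_{K ≤ i < n} (1 - aᵢ)) + ∑_{K ≤ i < n} vᵢ`,
as soon as `rᵢ ≤ ε/3` for `i ≥ K`. The Cauchy rate bounds the last sum by `ε/3` once `K > V(ε/3)`.
Since `1 - x ≤ e^{-x}`, the product is at most `exp (-∑_{K ≤ i < n} aᵢ)`, and the rate of divergence
makes that sum at least `ln (3D/ε)` for `n > A(K + ⌈ln (3D/ε)⌉)`, because the first `K` terms
contribute at most `K`; so the first term is at most `D · ε/(3D) = ε/3`.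
-/

open Finset Real

theorem prod_one_sub_le_exp_neg_sum {ι : Type*} (t : Finset ι) {a : ι → ℝ}
    (ha : ∀ i ∈ t, a i ≤ 1) : ∏ i ∈ t, (1 - a i) ≤ exp (-∑ i ∈ t, a i) := by
  rw [← sum_neg_distrib, exp_sum]
  exact prod_le_prod (fun i hi => sub_nonneg.mpr (ha i hi)) fun i _ => one_sub_le_exp_neg (a i)

theorem mul_exp_neg_log_div_le {x c : ℝ} (hx : 0 ≤ x) (hc : 0 < c) :
    x * exp (-log (x / c)) ≤ c := by
  rcases hx.eq_or_lt with rfl | hx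
  · simpa using hc.le
  · rw [exp_neg, exp_log (by positivity), inv_div, mul_div_cancel₀ c hx.ne']

theorem mul_prod_one_sub_le_of_log_le {ι : Type*} (t : Finset ι) {a : ι → ℝ} {x c : ℝ}
    (ha : ∀ i ∈ t, a i ≤ 1) (hx : 0 ≤ x) (hc : 0 < c) (hlog : log (x / c) ≤ ∑ i ∈ t, a i) :
    x * ∏ i ∈ t, (1 - a i) ≤ c :=
  calc x * ∏ i ∈ t, (1 - a i) ≤ x * exp (-∑ i ∈ t, a i) :=
        mul_le_mul_of_nonneg_left (prod_one_sub_le_exp_neg_sum t ha) hx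
    _ ≤ x * exp (-log (x / c)) := by gcongr
    _ ≤ c := mul_exp_neg_log_div_le hx hc

section Sequences

variable {a v : ℕ → ℝ}

theorem le_of_le_sum_range (ha : ∀ i, a i ≤ 1) {k m : ℕ} (h : (k : ℝ) ≤ ∑ i ∈ range m, a i) :
    k ≤ m := by
  have : ∑ i ∈ range m, a i ≤ m := by
    simpa using sum_le_sum fun i (_ : i ∈ range m) => ha i
  exact_mod_cast h.trans this

theorem le_sum_Ico_of_le_sum_range (ha : ∀ i, a i ∈ Set.Icc (0 : ℝ) 1) {k c m n : ℕ}
    (h : ((k + c : ℕ) : ℝ) ≤ ∑ i ∈ range m, a i) (hmn : m ≤ n) :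
    (c : ℝ) ≤ ∑ i ∈ Ico k n, a i := by
  have hkn : k ≤ n := by
    have := le_of_le_sum_range (fun i => (ha i).2) h
    omega
  have hmono : ∑ i ∈ range m, a i ≤ ∑ i ∈ range n, a i :=
    sum_le_sum_of_subset_of_nonneg (range_subset_range.mpr hmn) fun i _ _ => (ha i).1
  have hhead : ∑ i ∈ range k, a i ≤ k := by
    simpa using sum_le_sum fun i (_ : i ∈ range k) => (ha i).2
  rw [sum_Ico_eq_sub _ hkn]
  push_cast at h
  linarith

theorem sum_Ico_le_of_sum_Icc_le (hv : ∀ i, 0 ≤ v i) {N : ℕ} {ε : ℝ}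
    (hV : ∀ n : ℕ, ∑ i ∈ Icc (N + 1) (N + n), v i ≤ ε) {k : ℕ} (hk : N < k) (n : ℕ) :
    ∑ i ∈ Ico k n, v i ≤ ε := by
  refine le_trans (sum_le_sum_of_subset_of_nonneg ?_ fun i _ _ => hv i) (hV (n - 1 - N))
  intro i hi
  simp only [mem_Ico, mem_Icc] at hi ⊢
  omega

theorem le_mul_prod_add_sum_of_recursion (s r : ℕ → ℝ) (ha : ∀ i, a i ∈ Set.Icc (0 : ℝ) 1)
    (hv : ∀ i, 0 ≤ v i) {k : ℕ} {ρ : ℝ} (hr : ∀ i ≥ k, r i ≤ ρ)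
    (hrec : ∀ i, s (i + 1) ≤ (1 - a i) * s i + a i * r i + v i) {n : ℕ} (hkn : k ≤ n) :
    s n ≤ s k * ∏ i ∈ Ico k n, (1 - a i) + ρ * (1 - ∏ i ∈ Ico k n, (1 - a i))
      + ∑ i ∈ Ico k n, v i := by
  induction n, hkn using Nat.le_induction with
  | base => simp
  | succ n hkn ih =>
    rw [prod_Ico_succ_top hkn, sum_Ico_succ_top hkn]
    obtain ⟨ha0, ha1⟩ := ha n
    have hSv : 0 ≤ ∑ i ∈ Ico k n, v i := sum_nonneg fun i _ => hv i
    have h1 := mul_le_mul_of_nonneg_left ih (sub_nonneg.mpr ha1)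
    have h2 := mul_le_mul_of_nonneg_left (hr n hkn) ha0
    nlinarith [hrec n, mul_nonneg ha0 hSv]

end Sequences

theorem stmt1_general (s a r v : ℕ → ℝ) (D : ℕ)
    (hsD : ∀ n, s n ≤ (D : ℝ))
    (ha : ∀ n, a n ∈ Set.Icc (0 : ℝ) 1)
    (hv0 : ∀ n, 0 ≤ v n)
    (A : ℕ → ℕ) (R V : ℝ → ℕ)
    (hA : ∀ k : ℕ, (k : ℝ) ≤ ∑ i ∈ Finset.range (A k + 1), a i)
    (hR : ∀ ε : ℝ, 0 < ε → ∀ n ≥ R ε, r n ≤ ε)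
    (hV : ∀ ε : ℝ, 0 < ε → ∀ n : ℕ, ∑ i ∈ Finset.Icc (V ε + 1) (V ε + n), v i ≤ ε)
    (hrec : ∀ n, s (n + 1) ≤ (1 - a n) * s n + a n * r n + v n) :
    ∀ ε : ℝ, 0 < ε →
      ∀ n ≥ A (max (R (ε / 3)) (V (ε / 3) + 1) + ⌈Real.log (3 * D / ε)⌉₊) + 1,
        s n ≤ ε := by
  intro ε hε n hn
  have hε3 : 0 < ε / 3 := by positivity
  set K := max (R (ε / 3)) (V (ε / 3) + 1)
  set c := ⌈log (3 * D / ε)⌉₊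
  have hKn : K ≤ n := by
    have := le_of_le_sum_range (fun i => (ha i).2) (hA (K + c))
    omega
  have hunroll := le_mul_prod_add_sum_of_recursion s r ha hv0
    (fun i hi => hR _ hε3 i ((le_max_left _ _).trans hi)) hrec hKn
  set P := ∏ i ∈ Ico K n, (1 - a i)
  have hP0 : 0 ≤ P := prod_nonneg fun i _ => sub_nonneg.mpr (ha i).2
  have hP1 : P ≤ 1 :=
    prod_le_one (fun i _ => sub_nonneg.mpr (ha i).2) fun i _ => sub_le_self 1 (ha i).1
  have hlog : log (D / (ε / 3)) ≤ ∑ i ∈ Ico K n, a i := by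
    rw [div_div_eq_mul_div, mul_comm]
    exact (Nat.le_ceil _).trans (le_sum_Ico_of_le_sum_range ha (hA (K + c)) (by omega))
  have hDP := mul_prod_one_sub_le_of_log_le _ (fun i _ => (ha i).2) D.cast_nonneg hε3 hlog
  have hv := sum_Ico_le_of_sum_Icc_le hv0 (hV _ hε3) (by omega : V (ε / 3) < K) n
  nlinarith [mul_le_mul_of_nonneg_right (hsD K) hP0]

/-- Quantitative Xu lemma with rate of divergence `A`, rate `R` for `rₙ`, and
Cauchy rate `V` for `∑ vₙ`: the rate of convergence of `sₙ` towards `0` is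
`θ(ε) = A(K + ⌈ln(3D/ε)⌉) + 1` where `K = max{R(ε/3), V(ε/3) + 1}`. -/
theorem stmt1 (s a r v : ℕ → ℝ) (D : ℕ) (hD : 1 ≤ D)
    (hs0 : ∀ n, 0 ≤ s n) (hsD : ∀ n, s n ≤ (D : ℝ))
    (ha : ∀ n, a n ∈ Set.Icc (0 : ℝ) 1)
    (hv0 : ∀ n, 0 ≤ v n)
    (A : ℕ → ℕ) (R V : ℝ → ℕ)
    (hA : ∀ k : ℕ, (k : ℝ) ≤ ∑ i ∈ Finset.range (A k + 1), a i)
    (hR : ∀ ε : ℝ, 0 < ε → ∀ n ≥ R ε, r n ≤ ε)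
    (hV : ∀ ε : ℝ, 0 < ε → ∀ n : ℕ, ∑ i ∈ Finset.Icc (V ε + 1) (V ε + n), v i ≤ ε)
    (hrec : ∀ n, s (n + 1) ≤ (1 - a n) * s n + a n * r n + v n) :
    ∀ ε : ℝ, 0 < ε →
      ∀ n ≥ A (max (R (ε / 3)) (V (ε / 3) + 1) + ⌈Real.log (3 * D / ε)⌉₊) + 1,
        s n ≤ ε :=
  stmt1_general s a r v D hsD ha hv0 A R V hA hR hV hrec
end

section
/- Let H be a real Hilbert space, C ⊆ H a nonempty convex subset, and T, U : C → C nonexpansive maps with a common fixed point p. Let u ∈ C and let N ∈ ℕ, N ≥ 1, satisfy N ≥ 2‖u − p‖. Then for every ε > 0 and every function δ : (0,1] → (0,1] there exist η ∈ [Φ(ε,δ), 1] and x ∈ F_N(p, δ(η)) such that ⟨u − x, y − x⟩ ≤ ε for all y ∈ F_N(p, η), where Φ(ε,δ) := φ(ε̃, δ̃)²/(24N) with ε̃ := ε²/(4N²), δ̃(ξ) := min{ δ(ξ²/(24N)), ξ²/(24N) } for ξ ∈ (0,1], φ(ε,δ) := min{ δ^{(i)}(1) : i ≤ r }, and r :=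 ⌈N²/(4ε)⌉. -/
/-!
Let `e₀ = 1` and `eᵢ₊₁ = δ̃(eᵢ)`, and let `dᵢ` be the squared distance from `u` to
`F_N(p, eᵢ)`. All `dᵢ` lie in `[0, ‖u - p‖²] ⊆ [0, N²/4]`, so by telescoping one of the first
`r + 1` increments `dᵢ₊₁ - dᵢ` is below `ε̃`. Take `η = eᵢ²/(24N)` and `x ∈ F_N(p, eᵢ₊₁)` with
`‖u - x‖² < dᵢ + ε̃`; since `eᵢ₊₁ = min (δ η) η`, `x` is in `F_N(p, δ η) ∩ F_N(p, η)`.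
For `y ∈ F_N(p, η)` and `t = ε/(4N²)`, the point `m = (1 - t) x + t y` is an
`√(2Nη + η²)`-approximate fixed point of `T` and `U`, hence lies in `F_N(p, eᵢ)`, so
`dᵢ ≤ ‖u - m‖² = ‖u - x‖² - 2t⟪u - x, y - x⟫ + t²‖y - x‖²`, which forces `⟪u - x, y - x⟫ < ε`.
-/

open RealInnerProductSpace

/-- `F_N(a, η) = {x ∈ C : ‖x - T x‖ ≤ η, ‖x - U x‖ ≤ η, ‖x - a‖ ≤ N}`. -/
def FN {H : Type*} [NormedAddCommGroup H] (C : Set H) (T U : H → H) (N : ℕ)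
    (a : H) (η : ℝ) : Set H :=
  {x | x ∈ C ∧ ‖x - T x‖ ≤ η ∧ ‖x - U x‖ ≤ η ∧ ‖x - a‖ ≤ (N : ℝ)}

/-- `φ(ε, δ) = min{δ⁽ⁱ⁾(1) : i ≤ r}` with `r = ⌈N²/(4ε)⌉`. -/
noncomputable def phi (N : ℕ) (ε : ℝ) (δ : ℝ → ℝ) : ℝ :=
  (Finset.range (⌈(N : ℝ) ^ 2 / (4 * ε)⌉₊ + 1)).inf' Finset.nonempty_range_add_one
    (fun i => δ^[i] 1)

/-- `Φ(ε, δ) = φ(ε̃, δ̃)²/(24N)` with `ε̃ = ε²/(4N²)` and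
`δ̃(ξ) = min{δ(ξ²/(24N)), ξ²/(24N)}`. -/
noncomputable def Phi (N : ℕ) (ε : ℝ) (δ : ℝ → ℝ) : ℝ :=
  (phi N (ε ^ 2 / (4 * (N : ℝ) ^ 2))
      (fun ξ => min (δ (ξ ^ 2 / (24 * (N : ℝ)))) (ξ ^ 2 / (24 * (N : ℝ))))) ^ 2
    / (24 * (N : ℝ))

open Set Metric

section InnerProductSpace

variable {H : Type*} [NormedAddCommGroup H] [InnerProductSpace ℝ H]

lemma norm_sub_smul_sq (a b : H) (t : ℝ) :
    ‖a - t • b‖ ^ 2 = ‖a‖ ^ 2 - 2 * t * ⟪a, b⟫ + t ^ 2 * ‖b‖ ^ 2 := by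
  rw [norm_sub_sq_real, real_inner_smul_right, norm_smul, Real.norm_eq_abs, mul_pow, sq_abs]
  ring

lemma norm_sub_convexCombination_sq (z x y : H) (t : ℝ) :
    ‖z - ((1 - t) • x + t • y)‖ ^ 2
      = (1 - t) * ‖z - x‖ ^ 2 + t * ‖z - y‖ ^ 2 - t * (1 - t) * ‖x - y‖ ^ 2 := by
  have hm : z - ((1 - t) • x + t • y) = (z - x) - t • (y - x) := by module
  have hy : z - y = (z - x) - (1 : ℝ) • (y - x) := by module
  rw [hm, hy, norm_sub_smul_sq, norm_sub_smul_sq, norm_sub_rev x y]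
  ring

lemma norm_convexCombination_sub_apply_sq_le {C : Set H} (hC : Convex ℝ C) {V : H → H}
    (hV : ∀ a ∈ C, ∀ b ∈ C, ‖V a - V b‖ ≤ ‖a - b‖) {x y : H} (hx : x ∈ C) (hy : y ∈ C)
    {t η : ℝ} (ht₀ : 0 ≤ t) (ht₁ : t ≤ 1) (hxV : ‖x - V x‖ ≤ η) (hyV : ‖y - V y‖ ≤ η) :
    ‖(1 - t) • x + t • y - V ((1 - t) • x + t • y)‖ ^ 2 ≤ ‖x - y‖ * η + η ^ 2 := by
  set m := (1 - t) • x + t • y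
  have hm : m ∈ C := hC hx hy (by linarith) ht₀ (by ring)
  have hmx : ‖m - x‖ = t * ‖x - y‖ := by
    rw [show m - x = t • (y - x) by module, norm_smul, Real.norm_of_nonneg ht₀, norm_sub_rev]
  have hmy : ‖m - y‖ = (1 - t) * ‖x - y‖ := by
    rw [show m - y = (1 - t) • (x - y) by module, norm_smul, Real.norm_of_nonneg (by linarith)]
  have hVx : ‖V m - x‖ ≤ t * ‖x - y‖ + η := by
    calc ‖V m - x‖ ≤ ‖V m - V x‖ + ‖V x - x‖ := norm_sub_le_norm_sub_add_norm_sub _ _ _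
      _ ≤ t * ‖x - y‖ + η := by
        rw [norm_sub_rev (V x)]; linarith [hV m hm x hx]
  have hVy : ‖V m - y‖ ≤ (1 - t) * ‖x - y‖ + η := by
    calc ‖V m - y‖ ≤ ‖V m - V y‖ + ‖V y - y‖ := norm_sub_le_norm_sub_add_norm_sub _ _ _
      _ ≤ (1 - t) * ‖x - y‖ + η := by
        rw [norm_sub_rev (V y)]; linarith [hV m hm y hy]
  have hVx2 := pow_le_pow_left₀ (norm_nonneg _) hVx 2
  have hVy2 := pow_le_pow_left₀ (norm_nonneg _) hVy 2
  have hη : 0 ≤ η := (norm_nonneg _).trans hxV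
  -- the quadratic terms cancel, leaving `4t(1-t)‖x - y‖η + η²`
  rw [norm_sub_rev, norm_sub_convexCombination_sq]
  nlinarith [mul_le_mul_of_nonneg_left hVx2 (by linarith : 0 ≤ 1 - t),
    mul_le_mul_of_nonneg_left hVy2 ht₀, mul_nonneg (norm_nonneg (x - y)) hη,
    sq_nonneg (1 - 2 * t)]

lemma inner_sub_lt_of_norm_sub_sq_lt {u x y : H} {t ε D : ℝ} (ht : 0 < t)
    (hux : ‖u - x‖ ^ 2 < D + ε * t) (hD : D ≤ ‖u - ((1 - t) • x + t • y)‖ ^ 2)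
    (hy : t * ‖y - x‖ ^ 2 ≤ ε) : ⟪u - x, y - x⟫ < ε := by
  rw [show u - ((1 - t) • x + t • y) = (u - x) - t • (y - x) by module,
    norm_sub_smul_sq] at hD
  have := mul_le_mul_of_nonneg_left hy ht.le
  refine lt_of_mul_lt_mul_left ?_ ht.le
  nlinarith

end InnerProductSpace

lemma exists_succ_lt_add_of_sub_lt_mul {d : ℕ → ℝ} {r : ℕ} {c : ℝ}
    (h : d (r + 1) - d 0 < (r + 1) * c) : ∃ i ≤ r, d (i + 1) < d i + c := by
  rw [← Finset.sum_range_sub] at h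
  obtain ⟨i, hi, hlt⟩ := Finset.exists_lt_of_sum_lt (s := Finset.range (r + 1))
    (f := fun i => d (i + 1) - d i) (g := fun _ => c)
    (by simpa only [Finset.sum_const, Finset.card_range, nsmul_eq_mul, Nat.cast_add,
      Nat.cast_one] using h)
  exact ⟨i, Nat.lt_succ_iff.mp (Finset.mem_range.mp hi), by linarith⟩

lemma Metric.exists_norm_sub_sq_lt_of_infDist_sq_lt {E : Type*} [SeminormedAddCommGroup E]
    {s : Set E} (hs : s.Nonempty) {u : E} {c : ℝ} (h : infDist u s ^ 2 < c) :
    ∃ x ∈ s, ‖u - x‖ ^ 2 < c := by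
  obtain ⟨x, hx, hux⟩ := (infDist_lt_iff hs).mp ((Real.lt_sqrt infDist_nonneg).mpr h)
  exact ⟨x, hx, (Real.lt_sqrt (norm_nonneg _)).mp (by rwa [← dist_eq_norm])⟩

section Phi

variable {N : ℕ} {ε : ℝ} {δ : ℝ → ℝ}

lemma phi_le_iterate {i : ℕ} (hi : i ≤ ⌈(N : ℝ) ^ 2 / (4 * ε)⌉₊) : phi N ε δ ≤ δ^[i] 1 :=
  Finset.inf'_le _ (Finset.mem_range.mpr (Nat.lt_succ_of_le hi))

lemma phi_pos (hδ : MapsTo δ (Ioc 0 1) (Ioc 0 1)) : 0 < phi N ε δ :=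
  (Finset.lt_inf'_iff _).mpr fun i _ => (hδ.iterate i ⟨one_pos, le_rfl⟩).1

lemma sq_div_mem_Ioc (hN : 1 ≤ N) {ξ : ℝ} (hξ : ξ ∈ Ioc 0 1) :
    ξ ^ 2 / (24 * N) ∈ Ioc 0 1 := by
  have hN' : (1 : ℝ) ≤ N := by exact_mod_cast hN
  obtain ⟨hξ₀, hξ₁⟩ := hξ
  refine ⟨by positivity, (div_le_one (by positivity)).mpr ?_⟩
  nlinarith

lemma two_mul_mul_sq_div_add_sq_le_sq (hN : 1 ≤ N) {ξ : ℝ} (hξ : ξ ∈ Ioc 0 1) :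
    2 * N * (ξ ^ 2 / (24 * N)) + (ξ ^ 2 / (24 * N)) ^ 2 ≤ ξ ^ 2 := by
  have hN' : (1 : ℝ) ≤ N := by exact_mod_cast hN
  obtain ⟨hη₀, hη₁⟩ := sq_div_mem_Ioc hN hξ
  have h24 : 24 * N * (ξ ^ 2 / (24 * N)) = ξ ^ 2 := by field_simp
  nlinarith

noncomputable def deltaTilde (N : ℕ) (δ : ℝ → ℝ) (ξ : ℝ) : ℝ :=
  min (δ (ξ ^ 2 / (24 * N))) (ξ ^ 2 / (24 * N))

lemma deltaTilde_mapsTo (hN : 1 ≤ N) (hδ : MapsTo δ (Ioc 0 1) (Ioc 0 1)) :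
    MapsTo (deltaTilde N δ) (Ioc 0 1) (Ioc 0 1) := fun _ hξ =>
  have h := sq_div_mem_Ioc hN hξ
  ⟨lt_min (hδ h).1 h.1, min_le_of_left_le (hδ h).2⟩

lemma Phi_le_sq_iterate_div (hN : 1 ≤ N) (hδ : MapsTo δ (Ioc 0 1) (Ioc 0 1)) {i : ℕ}
    (hi : i ≤ ⌈(N : ℝ) ^ 2 / (4 * (ε ^ 2 / (4 * (N : ℝ) ^ 2)))⌉₊) :
    Phi N ε δ ≤ ((deltaTilde N δ)^[i] 1) ^ 2 / (24 * N) := by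
  have hpos := phi_pos (N := N) (ε := ε ^ 2 / (4 * (N : ℝ) ^ 2)) (deltaTilde_mapsTo hN hδ)
  unfold Phi
  gcongr
  exact phi_le_iterate hi

lemma Phi_le_one (hN : 1 ≤ N) (hδ : MapsTo δ (Ioc 0 1) (Ioc 0 1)) : Phi N ε δ ≤ 1 := by
  have hN' : (1 : ℝ) ≤ N := by exact_mod_cast hN
  refine (Phi_le_sq_iterate_div hN hδ (Nat.zero_le _)).trans ?_
  rw [Function.iterate_zero_apply, one_pow, div_le_one (by positivity)]
  linarith

end Phi

section FN

variable {H : Type*} [NormedAddCommGroup H] {C : Set H} {T U : H → H} {N : ℕ} {p u x y : H}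
  {η : ℝ}

lemma FN_mono {a b : ℝ} (hab : a ≤ b) : FN C T U N p a ⊆ FN C T U N p b :=
  fun _ ⟨hC, hT, hU, hp⟩ => ⟨hC, hT.trans hab, hU.trans hab, hp⟩

lemma self_mem_FN (hp : p ∈ C) (hTp : T p = p) (hUp : U p = p) (hη : 0 ≤ η) :
    p ∈ FN C T U N p η :=
  ⟨hp, by simpa [hTp] using hη, by simpa [hUp] using hη, by simp⟩

lemma norm_sub_le_of_mem_FN (hx : x ∈ FN C T U N p η) (hy : y ∈ FN C T U N p η) :
    ‖x - y‖ ≤ 2 * N := by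
  calc ‖x - y‖ ≤ ‖x - p‖ + ‖p - y‖ := norm_sub_le_norm_sub_add_norm_sub _ _ _
    _ ≤ 2 * N := by rw [norm_sub_rev p]; linarith [hx.2.2.2, hy.2.2.2]

lemma exists_infDist_FN_sq_lt_add (hp : p ∈ C) (hTp : T p = p) (hUp : U p = p)
    (hN : 2 * ‖u - p‖ ≤ N) (e : ℕ → ℝ) (he : ∀ i, 0 ≤ e i) {c : ℝ} (hc : 0 < c) :
    ∃ i ≤ ⌈(N : ℝ) ^ 2 / (4 * c)⌉₊,
      infDist u (FN C T U N p (e (i + 1))) ^ 2 < infDist u (FN C T U N p (e i)) ^ 2 + c := by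
  set r := ⌈(N : ℝ) ^ 2 / (4 * c)⌉₊
  have hr : (N : ℝ) ^ 2 ≤ r * (4 * c) := (div_le_iff₀ (by positivity)).mp (Nat.le_ceil _)
  have hd : infDist u (FN C T U N p (e (r + 1))) ≤ ‖u - p‖ := by
    rw [← dist_eq_norm]
    exact infDist_le_dist_of_mem (self_mem_FN hp hTp hUp (he _))
  refine exists_succ_lt_add_of_sub_lt_mul (d := fun i => infDist u (FN C T U N p (e i)) ^ 2) ?_
  nlinarith [pow_le_pow_left₀ infDist_nonneg hd 2, sq_nonneg (infDist u (FN C T U N p (e 0))),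
    norm_nonneg (u - p)]

variable [InnerProductSpace ℝ H]

lemma inner_sub_le_of_mem_FN (hN : 2 * ‖u - p‖ ≤ N) (hy : y ∈ FN C T U N p η) :
    ⟪u - p, y - p⟫ ≤ (N : ℝ) ^ 2 / 2 := by
  have hyp := mul_le_mul hN hy.2.2.2 (norm_nonneg _) (Nat.cast_nonneg N)
  nlinarith [real_inner_le_norm (u - p) (y - p)]

lemma convexCombination_mem_FN (hC : Convex ℝ C)
    (hT : ∀ a ∈ C, ∀ b ∈ C, ‖T a - T b‖ ≤ ‖a - b‖)
    (hU : ∀ a ∈ C, ∀ b ∈ C, ‖U a - U b‖ ≤ ‖a - b‖)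
    (hx : x ∈ FN C T U N p η) (hy : y ∈ FN C T U N p η) {t e : ℝ} (ht₀ : 0 ≤ t) (ht₁ : t ≤ 1)
    (he : 0 ≤ e) (hη : 2 * N * η + η ^ 2 ≤ e ^ 2) :
    (1 - t) • x + t • y ∈ FN C T U N p e := by
  have hxy := norm_sub_le_of_mem_FN hx hy
  obtain ⟨hxC, hxT, hxU, hxp⟩ := hx
  obtain ⟨hyC, hyT, hyU, hyp⟩ := hy
  have hη₀ : 0 ≤ η := (norm_nonneg _).trans hxT
  have hdefect : ∀ {V : H → H}, (∀ a ∈ C, ∀ b ∈ C, ‖V a - V b‖ ≤ ‖a - b‖) →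
      ‖x - V x‖ ≤ η → ‖y - V y‖ ≤ η →
      ‖(1 - t) • x + t • y - V ((1 - t) • x + t • y)‖ ≤ e := fun hV hxV hyV => by
    refine (pow_le_pow_iff_left₀ (norm_nonneg _) he two_ne_zero).mp ?_
    refine (norm_convexCombination_sub_apply_sq_le hC hV hxC hyC ht₀ ht₁ hxV hyV).trans ?_
    nlinarith [mul_le_mul_of_nonneg_right hxy hη₀]
  have hball : (1 - t) • x + t • y ∈ closedBall p N :=
    convex_closedBall p N (mem_closedBall_iff_norm.mpr hxp) (mem_closedBall_iff_norm.mpr hyp)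
      (by linarith) ht₀ (by ring)
  exact ⟨hC hxC hyC (by linarith) ht₀ (by ring), hdefect hT hxT hyT, hdefect hU hxU hyU,
    mem_closedBall_iff_norm.mp hball⟩

lemma inner_sub_lt_of_norm_sub_sq_lt_infDist_sq_add (hC : Convex ℝ C)
    (hT : ∀ a ∈ C, ∀ b ∈ C, ‖T a - T b‖ ≤ ‖a - b‖)
    (hU : ∀ a ∈ C, ∀ b ∈ C, ‖U a - U b‖ ≤ ‖a - b‖) (hN : 1 ≤ N)
    (hx : x ∈ FN C T U N p η) (hy : y ∈ FN C T U N p η) {ε e : ℝ} (hε : 0 < ε)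
    (hεN : ε ≤ 4 * (N : ℝ) ^ 2) (he : 0 ≤ e) (hη : 2 * N * η + η ^ 2 ≤ e ^ 2)
    (hux : ‖u - x‖ ^ 2 < infDist u (FN C T U N p e) ^ 2 + ε ^ 2 / (4 * (N : ℝ) ^ 2)) :
    ⟪u - x, y - x⟫ < ε := by
  have hN₀ : (0 : ℝ) < N := by exact_mod_cast hN
  set t := ε / (4 * (N : ℝ) ^ 2) with ht_def
  have ht : 0 < t := by positivity
  have hm := convexCombination_mem_FN hC hT hU hx hy ht.le
    ((div_le_one (by positivity)).mpr hεN) he hη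
  refine inner_sub_lt_of_norm_sub_sq_lt (D := infDist u (FN C T U N p e) ^ 2) ht ?_ ?_ ?_
  · convert hux using 2
    rw [ht_def]
    field_simp
  · rw [← dist_eq_norm]
    exact pow_le_pow_left₀ infDist_nonneg (infDist_le_dist_of_mem hm) 2
  · have hyx := pow_le_pow_left₀ (norm_nonneg _) (norm_sub_le_of_mem_FN hy hx) 2
    calc t * ‖y - x‖ ^ 2 ≤ t * (2 * N) ^ 2 := by gcongr
      _ = ε := by rw [ht_def]; field_simp; ring

end FN

theorem stmt14_general {H : Type*} [NormedAddCommGroup H] [InnerProductSpace ℝ H]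
    (C : Set H) (hCconv : Convex ℝ C)
    (T U : H → H)
    (hTne : ∀ x ∈ C, ∀ y ∈ C, ‖T x - T y‖ ≤ ‖x - y‖)
    (hUne : ∀ x ∈ C, ∀ y ∈ C, ‖U x - U y‖ ≤ ‖x - y‖)
    (p : H) (hp : p ∈ C) (hTp : T p = p) (hUp : U p = p)
    (u : H)
    (N : ℕ) (hN1 : 1 ≤ N) (hN : 2 * ‖u - p‖ ≤ (N : ℝ)) :
    ∀ ε : ℝ, 0 < ε → ∀ δ : ℝ → ℝ,
      (∀ ξ ∈ Set.Ioc (0 : ℝ) 1, δ ξ ∈ Set.Ioc (0 : ℝ) 1) →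
      ∃ η ∈ Set.Icc (Phi N ε δ) 1, ∃ x ∈ FN C T U N p (δ η),
        ∀ y ∈ FN C T U N p η, ⟪u - x, y - x⟫ ≤ ε := by
  intro ε hε δ hδ
  rcases le_or_gt ((N : ℝ) ^ 2 / 2) ε with hεN | hεN
  · exact ⟨1, ⟨Phi_le_one hN1 hδ, le_rfl⟩, p,
      self_mem_FN hp hTp hUp (hδ 1 (right_mem_Ioc.mpr one_pos)).1.le,
      fun y hy => (inner_sub_le_of_mem_FN hN hy).trans hεN⟩
  set e : ℕ → ℝ := fun i => (deltaTilde N δ)^[i] 1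
  have he : ∀ i, e i ∈ Ioc 0 1 := fun i =>
    (deltaTilde_mapsTo hN1 hδ).iterate i (right_mem_Ioc.mpr one_pos)
  obtain ⟨i, hir, hgap⟩ := exists_infDist_FN_sq_lt_add hp hTp hUp hN e (fun i => (he i).1.le)
    (by positivity : 0 < ε ^ 2 / (4 * (N : ℝ) ^ 2))
  set η := e i ^ 2 / (24 * N)
  have he_succ : e (i + 1) = min (δ η) η := Function.iterate_succ_apply' _ _ _
  obtain ⟨x, hx, hux⟩ := exists_norm_sub_sq_lt_of_infDist_sq_lt
    ⟨p, self_mem_FN hp hTp hUp (he (i + 1)).1.le⟩ hgap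
  refine ⟨η, ⟨Phi_le_sq_iterate_div hN1 hδ hir, (sq_div_mem_Ioc hN1 (he i)).2⟩, x,
    FN_mono (he_succ ▸ min_le_left _ _) hx, fun y hy => ?_⟩
  exact (inner_sub_lt_of_norm_sub_sq_lt_infDist_sq_add hCconv hTne hUne hN1
    (FN_mono (he_succ ▸ min_le_right _ _) hx) hy hε (by linarith [sq_nonneg (N : ℝ)])
    (he i).1.le (two_mul_mul_sq_div_add_sq_le_sq hN1 (he i)) hux).le

/-- Quantitative characterization of the metric projection: there exist
`η ∈ [Φ(ε,δ), 1]` and `x ∈ F_N(p, δ(η))` such that `⟪u - x, y - x⟫ ≤ ε` for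
all `y ∈ F_N(p, η)`. -/
theorem stmt14 {H : Type*} [NormedAddCommGroup H] [InnerProductSpace ℝ H]
    (C : Set H) (hCne : C.Nonempty) (hCconv : Convex ℝ C)
    (T U : H → H) (hTmaps : Set.MapsTo T C C) (hUmaps : Set.MapsTo U C C)
    (hTne : ∀ x ∈ C, ∀ y ∈ C, ‖T x - T y‖ ≤ ‖x - y‖)
    (hUne : ∀ x ∈ C, ∀ y ∈ C, ‖U x - U y‖ ≤ ‖x - y‖)
    (p : H) (hp : p ∈ C) (hTp : T p = p) (hUp : U p = p)
    (u : H) (hu : u ∈ C)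
    (N : ℕ) (hN1 : 1 ≤ N) (hN : 2 * ‖u - p‖ ≤ (N : ℝ)) :
    ∀ ε : ℝ, 0 < ε → ∀ δ : ℝ → ℝ,
      (∀ ξ ∈ Set.Ioc (0 : ℝ) 1, δ ξ ∈ Set.Ioc (0 : ℝ) 1) →
      ∃ η ∈ Set.Icc (Phi N ε δ) 1, ∃ x ∈ FN C T U N p (δ η),
        ∀ y ∈ FN C T U N p η, ⟪u - x, y - x⟫ ≤ ε :=
  stmt14_general C hCconv T U hTne hUne p hp hTp hUp u N hN1 hN
end
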